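/- For every r ≥ 1, the map c_4 : F_q → F_2^{q/2} sending a to (tr(a·(b+γ_0)^{-1}), ..., tr(a·(b+γ_{q/2−1})^{-1})) is an injective F_2-linear (additive) map, and its image is exactly the dual code C_4^⊥ = {w ∈ F_2^{q/2} : Σ_l w_l·u_l = 0 in F_2 for all u ∈ C_4}. In particular C_4^⊥ has exactly q elements. -/

import Mathlib

/-!
Over `F_q`, `q = 2^r`, the trace is additive with values in `F_2`, so `c_4` is additive and
every `c_4(a)` is orthogonal to `C_4`: `∑ tr(a v_l) u_l = tr(a ∑ u_l v_l) = tr 0 = 0`.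
The trace is a polynomial of degree `2^(r-1)`, so it has at most `q/2` zeros; a nonzero `a`
in the kernel of `c_4` would give the `q/2` distinct nonzero zeros `a/(b+γ_l)`, and `0` besides.
Finally `C_4` is the kernel of `u ↦ ∑ u_l v_l : F_2^(q/2) → F_q`, so its dual code, being the
annihilator of that kernel, has at most `q` elements, and the injective image of `F_q` fills it.
-/

open Finset

/-- The trace map `tr : F_q → F_2 ⊆ F_q`, `tr x = x + x² + ⋯ + x^(2^(r-1))`. -/
def trF {F : Type*} [Field F] (r : ℕ) (x : F) : F :=
  ∑ i ∈ Finset.range r, x ^ (2 ^ i)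

/-- The trace map with values in `F_2 = ZMod 2` (the value of `trF` is always `0` or `1`). -/
def tr2 {F : Type*} [Field F] [DecidableEq F] (r : ℕ) (x : F) : ZMod 2 :=
  if trF r x = 0 then 0 else 1

/-- The binary linear code `C = {u ∈ F_2^n : ∑_l u_l·v_l = 0 in F_q}`, where `u_l ∈ F_2`
acts on `F_q` through the inclusion `F_2 ⊆ F_q`. -/
def codeSet {F : Type*} [Field F] {n : ℕ} (v : Fin n → F) : Set (Fin n → ZMod 2) :=
  {u | ∑ l, (u l).val • v l = 0}

/-- The dual code `C^⊥ = {w ∈ F_2^n : ∑_l w_l·u_l = 0 in F_2 for all u ∈ C}`. -/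
def dualSet {F : Type*} [Field F] {n : ℕ} (v : Fin n → F) : Set (Fin n → ZMod 2) :=
  {w | ∀ u ∈ codeSet v, ∑ l, w l * u l = 0}

/-- The vector `(g_1⁻¹, …, g_m⁻¹) ∈ F_q^m`. -/
def invVec {F : Type*} [Field F] {m : ℕ} (g : Fin m → F) : Fin m → F :=
  fun l => (g l)⁻¹

/-- The codeword map `a ↦ (tr(a·v_1), …, tr(a·v_n)) ∈ F_2^n`. -/
def cw {F : Type*} [Field F] [DecidableEq F] (r : ℕ) {n : ℕ} (v : Fin n → F) (a : F) :
    Fin n → ZMod 2 :=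
  fun l => tr2 r (a * v l)

open Polynomial

section Trace

variable {F : Type*} [Field F] {r : ℕ}

theorem trF_zero : trF r (0 : F) = 0 :=
  sum_eq_zero fun i _ => zero_pow (Nat.two_pow_pos i).ne'

theorem eval_sum_X_pow_two_pow (x : F) :
    (∑ i ∈ range r, (X : F[X]) ^ 2 ^ i).eval x = trF r x := by
  simp [trF, eval_finsetSum]

theorem coeff_one_sum_X_pow_two_pow (hr : 1 ≤ r) :
    (∑ i ∈ range r, (X : F[X]) ^ 2 ^ i).coeff 1 = 1 := by
  rw [finsetSum_coeff, sum_eq_single_of_mem 0 (mem_range.mpr hr)]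
  · simp
  · intro i _ hi
    rw [coeff_X_pow, if_neg (Nat.one_lt_two_pow hi).ne]

theorem card_filter_trF_eq_zero_le [DecidableEq F] [Fintype F] (hr : 1 ≤ r) :
    #{x : F | trF r x = 0} ≤ 2 ^ (r - 1) := by
  have hcoeff := coeff_one_sum_X_pow_two_pow (F := F) hr
  set P : F[X] := ∑ i ∈ range r, X ^ 2 ^ i
  have hP : P ≠ 0 := fun h => by
    rw [h, coeff_zero] at hcoeff
    exact zero_ne_one hcoeff
  have hdeg : P.natDegree ≤ 2 ^ (r - 1) := by
    refine natDegree_sum_le_of_forall_le _ _ fun i hi => ?_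
    rw [natDegree_X_pow]
    exact Nat.pow_le_pow_right two_pos (by have := mem_range.mp hi; omega)
  refine (card_le_degree_of_subset_roots fun x hx => ?_).trans hdeg
  rw [mem_roots hP, IsRoot, eval_sum_X_pow_two_pow]
  exact (mem_filter.mp hx).2

theorem trF_sq [Fintype F] (hF : Fintype.card F = 2 ^ r) (x : F) :
    trF r (x ^ 2) = trF r x := by
  have hshift : trF r (x ^ 2) + x ^ 2 ^ 0 = trF r x + x ^ 2 ^ r := by
    simp only [trF, ← pow_mul, ← pow_succ', ← sum_range_succ' (fun i => x ^ 2 ^ i),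
      sum_range_succ]
  rwa [← hF, FiniteField.pow_card, pow_zero, pow_one, add_left_inj] at hshift

theorem trF_add [CharP F 2] (x y : F) : trF r (x + y) = trF r x + trF r y := by
  unfold trF
  rw [← sum_add_distrib]
  exact sum_congr rfl fun i _ => add_pow_char_pow x y 2 i

theorem trF_eq_zero_or_eq_one [CharP F 2] [Fintype F] (hF : Fintype.card F = 2 ^ r) (x : F) :
    trF r x = 0 ∨ trF r x = 1 := by
  have hsq : trF r x ^ 2 = trF r x := by
    refine Eq.trans ?_ (trF_sq hF x)
    unfold trF
    rw [sum_pow_char]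
    exact sum_congr rfl fun i _ => pow_right_comm x (2 ^ i) 2
  have : trF r x * (trF r x - 1) = 0 := by linear_combination hsq
  exact (mul_eq_zero.mp this).imp id sub_eq_zero.mp

variable [DecidableEq F]

theorem tr2_eq_zero_iff (x : F) : tr2 r x = 0 ↔ trF r x = 0 := by
  by_cases h : trF r x = 0 <;> simp [tr2, h]

theorem tr2_mul_eq_tr2_nsmul (x : F) (c : ZMod 2) : tr2 r x * c = tr2 r (c.val • x) := by
  obtain rfl | rfl : c = 0 ∨ c = 1 := by decide +revert
  · simp [tr2, trF_zero]
  · simp [tr2, ZMod.val_one]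

theorem tr2_add [CharP F 2] [Fintype F] (hF : Fintype.card F = 2 ^ r) (x y : F) :
    tr2 r (x + y) = tr2 r x + tr2 r y := by
  rcases trF_eq_zero_or_eq_one hF x with hx | hx <;>
    rcases trF_eq_zero_or_eq_one hF y with hy | hy <;>
    simp [tr2, trF_add, hx, hy, CharTwo.add_self_eq_zero]

end Trace

section Code

variable {F : Type*} [Field F] [Fintype F] [DecidableEq F] [CharP F 2] {r n : ℕ}

theorem cw_add (hF : Fintype.card F = 2 ^ r) (v : Fin n → F) (a a' : F) :
    cw r v (a + a') = cw r v a + cw r v a' :=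
  funext fun l => by simp only [cw, Pi.add_apply, add_mul, tr2_add hF]

theorem cw_injective (hF : Fintype.card F = 2 ^ r) {v : Fin n → F}
    (hv : Function.Injective v) (hv0 : ∀ l, v l ≠ 0) (hker : #{x : F | trF r x = 0} ≤ n) :
    Function.Injective (cw r v) := by
  refine (injective_iff_map_eq_zero (AddMonoidHom.mk' (cw r v) (cw_add hF v))).mpr
    fun a ha => by_contra fun ha0 => ?_
  set roots := insert 0 (image (fun l => a * v l) univ)
  have hroots : roots ⊆ ({x : F | trF r x = 0} : Finset F) := by
    simp only [roots, insert_subset_iff, mem_filter_univ, trF_zero, true_and, image_subset_iff]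
    exact fun l _ => (tr2_eq_zero_iff _).mp (congrFun ha l)
  have hcard : #roots = n + 1 := by
    rw [card_insert_of_notMem, card_image_of_injective _
      fun i j h => hv (mul_left_cancel₀ ha0 h), card_univ, Fintype.card_fin]
    simpa using fun l => mul_ne_zero ha0 (hv0 l)
  have := card_le_card hroots
  omega

theorem cw_mem_dualSet (hF : Fintype.card F = 2 ^ r) (v : Fin n → F) (a : F) :
    cw r v a ∈ dualSet v := by
  intro u hu
  let trHom : F →+ ZMod 2 := AddMonoidHom.mk' (tr2 r) (tr2_add hF)
  calc ∑ l, cw r v a l * u l = trHom (∑ l, (u l).val • (a * v l)) := by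
        simp only [map_sum]
        exact sum_congr rfl fun l _ => tr2_mul_eq_tr2_nsmul _ _
    _ = 0 := by
        simp only [← mul_smul_comm, ← mul_sum]
        rw [show ∑ l, (u l).val • v l = 0 from hu, mul_zero, map_zero]

omit [DecidableEq F] in
theorem card_dualSet_le (v : Fin n → F) : Nat.card (dualSet v) ≤ Fintype.card F := by
  let _ := ZMod.algebra F 2
  let ψ := Fintype.linearCombination (ZMod 2) v
  have hmem : ∀ w, w ∈ dualSet v ↔
      dotProductEquiv (ZMod 2) (Fin n) w ∈ (LinearMap.ker ψ).dualAnnihilator := by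
    intro w
    simp only [Submodule.mem_dualAnnihilator, LinearMap.mem_ker,
      dotProductEquiv_apply_apply, dotProduct]
    refine forall_congr' fun u => imp_congr_left (Eq.congr_left (sum_congr rfl fun l _ => ?_))
    rw [nsmul_eq_mul, ZMod.natCast_val, Algebra.smul_def]
    rfl
  calc Nat.card (dualSet v)
      = Nat.card (LinearMap.ker ψ).dualAnnihilator :=
        Nat.card_congr ((dotProductEquiv (ZMod 2) (Fin n)).toEquiv.subtypeEquiv hmem)
    _ = Nat.card (LinearMap.range ψ) :=
        (Nat.card_congr (Subspace.quotEquivAnnihilator _).toEquiv).symm.trans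
          (Nat.card_congr ψ.quotKerEquivRange.toEquiv)
    _ ≤ Fintype.card F := (Finite.card_subtype_le _).trans Nat.card_eq_fintype_card.le

theorem range_cw_eq_dualSet (hF : Fintype.card F = 2 ^ r) {v : Fin n → F}
    (hinj : Function.Injective (cw r v)) : Set.range (cw r v) = dualSet v := by
  refine Set.eq_of_subset_of_ncard_le (Set.range_subset_iff.mpr (cw_mem_dualSet hF v)) ?_
  rw [← Nat.card_coe_set_eq, ← Nat.card_coe_set_eq, Nat.card_range_of_injective hinj,
    Nat.card_eq_fintype_card (α := F)]
  exact card_dualSet_le v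

end Code

/-- For every `r ≥ 1`, the map `c_4 : F_q → F_2^(q/2)`,
`a ↦ (tr(a·(b+γ_0)⁻¹), …, tr(a·(b+γ_{q/2−1})⁻¹))`,
where `b ∈ F_q \ Θ(F_q)` and `γ_0 = 0, γ_1, …, γ_{q/2−1}` enumerate the elements of
`Θ(F_q) = {α² + α : α ∈ F_q}`, is an injective `F_2`-linear (additive) map whose image is
exactly the dual code `C_4^⊥`; in particular `C_4^⊥` has exactly `q` elements. -/
theorem c4_injective_additive_range_eq_dual {F : Type*} [Field F] [Fintype F] [DecidableEq F]
    (r : ℕ) (hr : 1 ≤ r) (hF : Fintype.card F = 2 ^ r)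
    (b : F) (hb : ∀ α : F, α ^ 2 + α ≠ b)
    (γ : Fin (2 ^ (r - 1)) → F) (hγinj : Function.Injective γ)
    (hγran : Set.range γ = {β : F | ∃ α : F, β = α ^ 2 + α}) :
    Function.Injective (cw r (invVec (fun i => b + γ i))) ∧
    (∀ a a' : F, cw r (invVec (fun i => b + γ i)) (a + a')
        = cw r (invVec (fun i => b + γ i)) a + cw r (invVec (fun i => b + γ i)) a') ∧
    Set.range (cw r (invVec (fun i => b + γ i))) = dualSet (invVec (fun i => b + γ i)) ∧
    Nat.card (dualSet (invVec (fun i => b + γ i))) = 2 ^ r := by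
  have : CharP F 2 := charP_of_card_eq_prime_pow hF
  have hne : ∀ i, b + γ i ≠ 0 := fun i h => by
    obtain ⟨α, hα⟩ : γ i ∈ {β : F | ∃ α : F, β = α ^ 2 + α} := hγran ▸ ⟨i, rfl⟩
    exact hb α (hα ▸ (CharTwo.add_eq_zero.mp h).symm)
  have hv : Function.Injective (invVec fun i => b + γ i) :=
    fun i j h => hγinj (add_left_cancel (inv_injective h))
  have hinj := cw_injective hF hv (fun i => inv_ne_zero (hne i)) (card_filter_trF_eq_zero_le hr)
  have hrange := range_cw_eq_dualSet hF hinj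
  refine ⟨hinj, cw_add hF _, hrange, ?_⟩
  rw [← hrange, Nat.card_range_of_injective hinj, Nat.card_eq_fintype_card, hF]
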